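/- arXiv:2410.08838 — 3 statements merged into one kernel-verified Lean document; each statement's English description precedes it below -/
import Mathlib

section
/- Let H be an infinite-dimensional complex separable Hilbert space and let T be a bounded linear operator on H that is hypercyclic. Then T satisfies property (UW_E) if and only if E(T) = ∅. -/
noncomputable section

open Set MeasureTheory

/-- The operator `T - λ·I`. -/
def opShift {E : Type*} [NormedAddCommGroup E] [InnerProductSpace ℂ E]
    (T : E →L[ℂ] E) (lam : ℂ) : E →L[ℂ] E :=
  T - lam • ContinuousLinearMap.id ℂ E

/-- Upper semi-Fredholm: closed range and finite-dimensional kernel. -/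
def IsUSF {E : Type*} [NormedAddCommGroup E] [InnerProductSpace ℂ E]
    (T : E →L[ℂ] E) : Prop :=
  IsClosed (LinearMap.range (T : E →ₗ[ℂ] E) : Set E) ∧ FiniteDimensional ℂ (LinearMap.ker (T : E →ₗ[ℂ] E))

/-- Lower semi-Fredholm: closed range and finite codimension. -/
def IsLSF {E : Type*} [NormedAddCommGroup E] [InnerProductSpace ℂ E]
    (T : E →L[ℂ] E) : Prop :=
  IsClosed (LinearMap.range (T : E →ₗ[ℂ] E) : Set E) ∧ FiniteDimensional ℂ (E ⧸ LinearMap.range (T : E →ₗ[ℂ] E))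

/-- Fredholm operator. -/
def IsFredholmOp {E : Type*} [NormedAddCommGroup E] [InnerProductSpace ℂ E]
    (T : E →L[ℂ] E) : Prop :=
  IsUSF T ∧ IsLSF T

/-- `ind T ≤ 0`, i.e. `dim ker T ≤ codim ran T`. -/
def indexNonpos {E : Type*} [NormedAddCommGroup E] [InnerProductSpace ℂ E]
    (T : E →L[ℂ] E) : Prop :=
  Module.rank ℂ (LinearMap.ker (T : E →ₗ[ℂ] E)) ≤ Module.rank ℂ (E ⧸ LinearMap.range (T : E →ₗ[ℂ] E))

/-- `ind T = 0`, i.e. `dim ker T = codim ran T`. -/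
def indexZero {E : Type*} [NormedAddCommGroup E] [InnerProductSpace ℂ E]
    (T : E →L[ℂ] E) : Prop :=
  Module.rank ℂ (LinearMap.ker (T : E →ₗ[ℂ] E)) = Module.rank ℂ (E ⧸ LinearMap.range (T : E →ₗ[ℂ] E))

/-- The approximate point spectrum: `λ` such that `T - λ` is not bounded below. -/
def specA {E : Type*} [NormedAddCommGroup E] [InnerProductSpace ℂ E]
    (T : E →L[ℂ] E) : Set ℂ :=
  {lam | ¬ ∃ c > 0, ∀ x : E, c * ‖x‖ ≤ ‖T x - lam • x‖}

/-- The upper semi-Weyl spectrum. -/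
def specUW {E : Type*} [NormedAddCommGroup E] [InnerProductSpace ℂ E]
    (T : E →L[ℂ] E) : Set ℂ :=
  {lam | ¬ (IsUSF (opShift T lam) ∧ indexNonpos (opShift T lam))}

/-- The Weyl spectrum. -/
def specW {E : Type*} [NormedAddCommGroup E] [InnerProductSpace ℂ E]
    (T : E →L[ℂ] E) : Set ℂ :=
  {lam | ¬ (IsFredholmOp (opShift T lam) ∧ indexZero (opShift T lam))}

/-- `lam` is an isolated point of the set `S`. -/
def IsIsolatedIn (S : Set ℂ) (lam : ℂ) : Prop :=
  lam ∈ S ∧ ∃ ε > 0, S ∩ Metric.ball lam ε = {lam}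

/-- `E(T)`: the isolated points of the spectrum that are eigenvalues. -/
def Eset {E : Type*} [NormedAddCommGroup E] [InnerProductSpace ℂ E]
    (T : E →L[ℂ] E) : Set ℂ :=
  {lam | IsIsolatedIn (spectrum ℂ T) lam ∧ ∃ x : E, x ≠ 0 ∧ T x = lam • x}

/-- `E₀(T)`: the isolated points of the spectrum that are eigenvalues of finite multiplicity. -/
def E0set {E : Type*} [NormedAddCommGroup E] [InnerProductSpace ℂ E]
    (T : E →L[ℂ] E) : Set ℂ :=
  {lam | IsIsolatedIn (spectrum ℂ T) lam ∧ (∃ x : E, x ≠ 0 ∧ T x = lam • x) ∧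
    FiniteDimensional ℂ (LinearMap.ker (opShift T lam : E →ₗ[ℂ] E))}

/-- Property `(UW_E)`: `σ_a(T) \ σ_uw(T) = E(T)`. -/
def PropUWE {E : Type*} [NormedAddCommGroup E] [InnerProductSpace ℂ E]
    (T : E →L[ℂ] E) : Prop :=
  specA T \ specUW T = Eset T

/-- Property `(V_E)`: `σ(T) \ σ_uw(T) = E(T)`. -/
def PropVE {E : Type*} [NormedAddCommGroup E] [InnerProductSpace ℂ E]
    (T : E →L[ℂ] E) : Prop :=
  spectrum ℂ T \ specUW T = Eset T

/-- Property `(W_E)`: `σ(T) \ σ_w(T) = E(T)`. -/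
def PropWE {E : Type*} [NormedAddCommGroup E] [InnerProductSpace ℂ E]
    (T : E →L[ℂ] E) : Prop :=
  spectrum ℂ T \ specW T = Eset T

/-- Weyl's theorem: `σ(T) \ σ_w(T) = E₀(T)`. -/
def WeylsTheorem {E : Type*} [NormedAddCommGroup E] [InnerProductSpace ℂ E]
    (T : E →L[ℂ] E) : Prop :=
  spectrum ℂ T \ specW T = E0set T

/-- `T` is hypercyclic: some orbit is dense. -/
def Hypercyclic {E : Type*} [NormedAddCommGroup E] [InnerProductSpace ℂ E]
    (T : E →L[ℂ] E) : Prop :=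
  ∃ x : E, Dense (Set.range fun n : ℕ => (T ^ n) x)

/-- `T` is supercyclic: the scaled orbit of some vector is dense. -/
def Supercyclic {E : Type*} [NormedAddCommGroup E] [InnerProductSpace ℂ E]
    (T : E →L[ℂ] E) : Prop :=
  ∃ x : E, Dense {y : E | ∃ (c : ℂ) (n : ℕ), y = c • (T ^ n) x}

/-- The ascent of `T`, as an extended natural number. -/
def ascent {E : Type*} [NormedAddCommGroup E] [InnerProductSpace ℂ E]
    (T : E →L[ℂ] E) : ℕ∞ :=
  sInf ((fun n : ℕ => (n : ℕ∞)) '' {n : ℕ | LinearMap.ker ((T ^ n : E →L[ℂ] E) : E →ₗ[ℂ] E) = LinearMap.ker ((T ^ (n + 1) : E →L[ℂ] E) : E →ₗ[ℂ] E)})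

/-- The descent of `T`, as an extended natural number. -/
def descent {E : Type*} [NormedAddCommGroup E] [InnerProductSpace ℂ E]
    (T : E →L[ℂ] E) : ℕ∞ :=
  sInf ((fun n : ℕ => (n : ℕ∞)) ''
    {n : ℕ | LinearMap.range ((T ^ n : E →L[ℂ] E) : E →ₗ[ℂ] E) = LinearMap.range ((T ^ (n + 1) : E →L[ℂ] E) : E →ₗ[ℂ] E)})

/-- Browder operator: Fredholm with equal finite ascent and descent. -/
def IsBrowder {E : Type*} [NormedAddCommGroup E] [InnerProductSpace ℂ E]
    (T : E →L[ℂ] E) : Prop :=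
  IsFredholmOp T ∧ ascent T = descent T ∧ ascent T < ⊤

/-- The Browder spectrum. -/
def specB {E : Type*} [NormedAddCommGroup E] [InnerProductSpace ℂ E]
    (T : E →L[ℂ] E) : Set ℂ :=
  {lam | ¬ IsBrowder (opShift T lam)}

/-- The essential spectrum. -/
def specE {E : Type*} [NormedAddCommGroup E] [InnerProductSpace ℂ E]
    (T : E →L[ℂ] E) : Set ℂ :=
  {lam | ¬ IsFredholmOp (opShift T lam)}

/-- The left essential spectrum. -/
def specLE {E : Type*} [NormedAddCommGroup E] [InnerProductSpace ℂ E]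
    (T : E →L[ℂ] E) : Set ℂ :=
  {lam | ¬ IsUSF (opShift T lam)}

/-- The right essential spectrum. -/
def specRE {E : Type*} [NormedAddCommGroup E] [InnerProductSpace ℂ E]
    (T : E →L[ℂ] E) : Set ℂ :=
  {lam | ¬ IsLSF (opShift T lam)}

/-!
For every `λ`, the range of `T - λ` is dense: otherwise Hahn–Banach gives a functional `f ≠ 0`
with `f ∘ T = λ f`, which maps the dense orbit of `x` onto the geometric sequence `λⁿ f(x)`,
and no geometric sequence is dense in the scalar field. Hence if `T - λ` is upper semi-Fredholm,
its range is closed and dense, so it is onto; `ind (T - λ) ≤ 0` then forces it to be injective,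
and an injective operator with closed range is bounded below. So `σ_a(T) \ σ_uw(T) = ∅`.
-/

theorem not_dense_range_pow_mul {𝕜 : Type*} [NontriviallyNormedField 𝕜] (a c : 𝕜) :
    ¬ Dense (range fun n : ℕ => a ^ n * c) := by
  intro hdense
  have false_of_subset_isClosed {s : Set 𝕜} (hs : IsClosed s)
      (hsub : (range fun n : ℕ => a ^ n * c) ⊆ s) (z : 𝕜) (hz : z ∉ s) : False :=
    hz (hs.closure_subset_iff.mpr hsub (hdense.closure_eq ▸ mem_univ z))
  by_cases hsmall : ‖a‖ ≤ 1 ∨ c = 0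
  · obtain ⟨z, hz⟩ := NormedField.exists_lt_norm 𝕜 ‖c‖
    refine false_of_subset_isClosed (s := Metric.closedBall 0 ‖c‖) Metric.isClosed_closedBall ?_
      z (by simpa using hz)
    rintro _ ⟨n, rfl⟩
    rcases hsmall with ha | rfl
    · rw [mem_closedBall_zero_iff, norm_mul, norm_pow]
      exact mul_le_of_le_one_left (norm_nonneg c) (pow_le_one₀ (norm_nonneg a) ha)
    · simp
  · rw [not_or, not_le] at hsmall
    refine false_of_subset_isClosed (s := {z | ‖c‖ ≤ ‖z‖})
      (isClosed_le continuous_const continuous_norm) ?_ 0 (by simpa using hsmall.2)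
    rintro _ ⟨n, rfl⟩
    rw [mem_ofPred_eq, norm_mul, norm_pow]
    exact le_mul_of_one_le_left (norm_nonneg c) (one_le_pow₀ hsmall.1.le)

section Dual

variable {𝕜 E F : Type*} [RCLike 𝕜] [NormedAddCommGroup E] [NormedSpace 𝕜 E]
  [NormedAddCommGroup F] [NormedSpace 𝕜 F]

theorem exists_dual_ne_zero_comp_eq_zero_of_not_denseRange {A : E →L[𝕜] F}
    (hA : ¬ DenseRange A) : ∃ f : StrongDual 𝕜 F, f ≠ 0 ∧ f.comp A = 0 := by
  set M := (LinearMap.range (A : E →ₗ[𝕜] F)).topologicalClosure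
  have : IsClosed (M : Set F) := Submodule.isClosed_topologicalClosure _
  obtain ⟨y, hy⟩ : ∃ y, y ∉ (M : Set F) := by
    simpa [DenseRange, dense_iff_closure_eq, eq_univ_iff_forall, M, LinearMap.coe_range] using hA
  obtain ⟨g, hg⟩ := SeparatingDual.exists_ne_zero (R := 𝕜) (x := M.mkQ y) (by simpa using hy)
  refine ⟨g.comp M.mkQL, fun h => hg (by simpa using congr($h y)), ?_⟩
  ext x
  have hx : Submodule.Quotient.mk (p := M) (A x) = 0 :=
    (Submodule.Quotient.mk_eq_zero M).mpr (Submodule.le_topologicalClosure _ ⟨x, rfl⟩)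
  simp [hx]

theorem not_dense_orbit_of_dual_comp_eq_smul {T : E →L[𝕜] E} {f : StrongDual 𝕜 E} (hf : f ≠ 0)
    {a : 𝕜} (hfT : f.comp T = a • f) (x : E) : ¬ Dense (range fun n : ℕ => (T ^ n) x) := by
  intro hx
  have hstep (y : E) : f (T y) = a * f y := by simpa using congr($hfT y)
  have horbit (n : ℕ) : f ((T ^ n) x) = a ^ n * f x := by
    induction n with
    | zero => simp
    | succ n ih => rw [pow_succ', mul_apply_eq_comp, hstep, ih, pow_succ', mul_assoc]
  have hsurj : Function.Surjective f :=
    LinearMap.surjective_iff_ne_zero.mpr fun h => hf (ContinuousLinearMap.coe_injective h)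
  apply not_dense_range_pow_mul a (f x)
  have himage : f '' range (fun n : ℕ => (T ^ n) x) = range fun n : ℕ => a ^ n * f x := by
    rw [← range_comp]
    exact congrArg range (funext horbit)
  exact himage ▸ hsurj.denseRange.dense_image f.continuous hx

theorem denseRange_sub_smul_of_dense_orbit {T : E →L[𝕜] E} {x : E}
    (hx : Dense (range fun n : ℕ => (T ^ n) x)) (a : 𝕜) :
    DenseRange (T - a • ContinuousLinearMap.id 𝕜 E) := by
  by_contra hA
  obtain ⟨f, hf, hfA⟩ := exists_dual_ne_zero_comp_eq_zero_of_not_denseRange hA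
  refine not_dense_orbit_of_dual_comp_eq_smul hf (a := a) ?_ x hx
  ext z
  simpa [sub_eq_zero] using congr($hfA z)

end Dual

section InnerProduct

variable {H : Type*} [NormedAddCommGroup H] [InnerProductSpace ℂ H]

theorem injective_of_indexNonpos_of_range_eq_top {A : H →L[ℂ] H} (hind : indexNonpos A)
    (htop : LinearMap.range (A : H →ₗ[ℂ] H) = ⊤) : Function.Injective A := by
  have hcoker : Module.rank ℂ (H ⧸ LinearMap.range (A : H →ₗ[ℂ] H)) = 0 := by
    rw [htop]
    exact rank_subsingleton' ℂ _
  have hker : LinearMap.ker (A : H →ₗ[ℂ] H) = ⊥ :=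
    Submodule.rank_eq_zero.mp (le_antisymm (hind.trans_eq hcoker) zero_le)
  exact LinearMap.ker_eq_bot.mp hker

theorem specA_diff_specUW_eq_empty_of_denseRange [CompleteSpace H] {T : H →L[ℂ] H}
    (hdense : ∀ lam, DenseRange (opShift T lam)) : specA T \ specUW T = ∅ := by
  refine eq_empty_of_forall_notMem fun lam ⟨happrox, hweyl⟩ => happrox ?_
  obtain ⟨⟨hclosed, -⟩, hind⟩ := not_not.mp hweyl
  have htop : LinearMap.range (opShift T lam : H →ₗ[ℂ] H) = ⊤ :=
    SetLike.coe_injective (hclosed.closure_eq.symm.trans (hdense lam).closure_eq)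
  have hinj := injective_of_indexNonpos_of_range_eq_top hind htop
  simpa [opShift] using antilipschitzWith_iff_exists_mul_le_norm.mp
    ((opShift T lam).antilipschitz_of_injective_of_isClosed_range hinj
      (by simpa [LinearMap.coe_range] using hclosed))

end InnerProduct

theorem hypercyclic_propUWE_iff_Eset_empty_general
    {H : Type*} [NormedAddCommGroup H] [InnerProductSpace ℂ H] [CompleteSpace H]
    (T : H →L[ℂ] H) (hT : Hypercyclic T) :
    PropUWE T ↔ Eset T = ∅ := by
  obtain ⟨x, horbit⟩ := hT
  rw [PropUWE, specA_diff_specUW_eq_empty_of_denseRange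
    (denseRange_sub_smul_of_dense_orbit horbit), eq_comm]

/-- a hypercyclic operator on an infinite-dimensional complex separable
Hilbert space satisfies property `(UW_E)` iff `E(T) = ∅`. -/
theorem hypercyclic_propUWE_iff_Eset_empty
    {H : Type*} [NormedAddCommGroup H] [InnerProductSpace ℂ H] [CompleteSpace H]
    [TopologicalSpace.SeparableSpace H] (hinf : ¬ FiniteDimensional ℂ H)
    (T : H →L[ℂ] H) (hT : Hypercyclic T) :
    PropUWE T ↔ Eset T = ∅ :=
  hypercyclic_propUWE_iff_Eset_empty_general T hT
end
end

section
/- Let H be an infinite-dimensional complex separable Hilbert space and T a bounded linear operator on H. Then T satisfies property (UW_E) if and only if all three of the following hold: T satisfies Weyl's theorem, σ_w(T) \ σ_uw(T) = σ(T) \ σ_a(T), and E(T) = E₀(T). -/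
noncomputable section

open Set MeasureTheory

/-! If `λ` is isolated in `σ(T)` and `A = T - λ` is upper semi-Fredholm, then `A` is Fredholm of
index zero. Indeed `A` is bounded below by some `γ > 0` on `(ker A)ᗮ`, and since `λ` is a boundary
point of `σ(T)`, `A - μ` is invertible for some `μ` with `|μ| < γ`. If `x ∈ (ker A)ᗮ` and
`(A - μ) x ⊥ ran A`, then `‖A x‖² = μ ⟪A x, x⟫`, so `γ ‖x‖ ≤ ‖A x‖ ≤ |μ| ‖x‖` and `x = 0`. Thus
`f ↦ P_{ker A} (A - μ)⁻¹ f` embeds `(ran A)ᗮ` into `ker A`, i.e. `codim ran A ≤ dim ker A`.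
The rest is bookkeeping with `σ_uw ⊆ σ_w ⊆ σ`, `σ_uw ⊆ σ_a ⊆ σ`, the fact that `σ \ σ_w` consists of
eigenvalues, and the fact that a bounded below operator of index zero is invertible. -/

theorem rank_quotient_eq_zero_iff {K M : Type*} [DivisionRing K] [AddCommGroup M] [Module K M]
    (p : Submodule K M) : Module.rank K (M ⧸ p) = 0 ↔ p = ⊤ :=
  rank_zero_iff.trans Submodule.Quotient.subsingleton_iff

theorem IsIsolatedIn.mem_closure_compl {S : Set ℂ} {lam : ℂ} (h : IsIsolatedIn S lam) :
    lam ∈ closure Sᶜ := by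
  obtain ⟨ε, hε, hS⟩ := h.2
  rw [closure_compl]
  intro hint
  have : lam ∈ interior (S ∩ Metric.ball lam ε) := by
    rw [interior_inter, Metric.isOpen_ball.interior_eq]
    exact ⟨hint, Metric.mem_ball_self hε⟩
  rwa [hS, interior_singleton] at this

section InnerProduct

variable {𝕜 E : Type*} [RCLike 𝕜] [NormedAddCommGroup E] [InnerProductSpace 𝕜 E]

theorem norm_le_of_inner_sub_smul_eq_zero {x y : E} {μ : 𝕜}
    (h : inner 𝕜 y (y - μ • x) = 0) : ‖y‖ ≤ ‖μ‖ * ‖x‖ := by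
  have hyy : inner 𝕜 y y = μ * inner 𝕜 y x := by
    rwa [inner_sub_right, inner_smul_right, sub_eq_zero] at h
  rcases (norm_nonneg y).eq_or_lt with hy | hy
  · rw [← hy]; positivity
  refine le_of_mul_le_mul_left ?_ hy
  calc ‖y‖ * ‖y‖ = RCLike.re (inner 𝕜 y y) := (inner_self_eq_norm_mul_norm y).symm
    _ ≤ ‖μ * inner 𝕜 y x‖ := hyy ▸ RCLike.re_le_norm _
    _ ≤ ‖μ‖ * (‖y‖ * ‖x‖) := by rw [norm_mul]; gcongr; exact norm_inner_le_norm y x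
    _ = ‖y‖ * (‖μ‖ * ‖x‖) := by ring

end InnerProduct

section ClosedRange

variable {𝕜 E F : Type*} [RCLike 𝕜] [NormedAddCommGroup E] [InnerProductSpace 𝕜 E]
  [CompleteSpace E] [NormedAddCommGroup F] [NormedSpace 𝕜 F] [CompleteSpace F]

theorem exists_pos_mul_norm_le_of_mem_orthogonal_ker (A : E →L[𝕜] F)
    (hA : IsClosed (LinearMap.range (A : E →ₗ[𝕜] F) : Set F)) :
    ∃ γ > 0, ∀ x ∈ (LinearMap.ker (A : E →ₗ[𝕜] F))ᗮ, γ * ‖x‖ ≤ ‖A x‖ := by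
  set K := LinearMap.ker (A : E →ₗ[𝕜] F)
  have : CompleteSpace K := A.isClosed_ker.completeSpace_coe
  let f := A.comp Kᗮ.subtypeL
  have hinj : Function.Injective f := (injective_iff_map_eq_zero f).2 fun v hv =>
    Subtype.ext (Submodule.disjoint_def.1 K.orthogonal_disjoint v hv v.2)
  have hrange : Set.range f = Set.range A := by
    refine subset_antisymm (Set.range_comp_subset_range (Kᗮ.subtypeL : Kᗮ → E) A) ?_
    rintro _ ⟨x, rfl⟩
    refine ⟨⟨x - K.starProjection x, K.sub_starProjection_mem_orthogonal x⟩, ?_⟩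
    have hPx : A (K.starProjection x) = 0 := K.starProjection_apply_mem x
    simp [f, hPx]
  obtain ⟨C, hC⟩ := f.antilipschitz_of_injective_of_isClosed_range hinj
    (by rwa [hrange, ← ContinuousLinearMap.coe_coe, ← LinearMap.coe_range])
  refine ⟨(C + 1)⁻¹, by positivity, fun x hx => ?_⟩
  have hx := f.bound_of_antilipschitz hC ⟨x, hx⟩
  rw [inv_mul_le_iff₀ (by positivity)]
  calc ‖x‖ ≤ C * ‖A x‖ := hx
    _ ≤ (C + 1) * ‖A x‖ := by gcongr; linarith

theorem rank_quotient_range_sub_le_rank_ker (T : E →L[𝕜] E) {lam : 𝕜}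
    (hA : IsClosed (LinearMap.range ((T - lam • 1 : E →L[𝕜] E) : E →ₗ[𝕜] E) : Set E))
    (hlam : lam ∈ closure (spectrum 𝕜 T)ᶜ) :
    Module.rank 𝕜 (E ⧸ LinearMap.range ((T - lam • 1 : E →L[𝕜] E) : E →ₗ[𝕜] E)) ≤
      Module.rank 𝕜 (LinearMap.ker ((T - lam • 1 : E →L[𝕜] E) : E →ₗ[𝕜] E)) := by
  set A : E →L[𝕜] E := T - lam • 1
  set K := LinearMap.ker (A : E →ₗ[𝕜] E)
  set R := LinearMap.range (A : E →ₗ[𝕜] E)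
  obtain ⟨γ, hγ, hbd⟩ := exists_pos_mul_norm_le_of_mem_orthogonal_ker A hA
  obtain ⟨ν, hν, hdist⟩ := Metric.mem_closure_iff.1 hlam γ hγ
  set μ := ν - lam
  have hunit : IsUnit (A - μ • 1) := by
    have : A - μ • 1 = -(algebraMap 𝕜 (E →L[𝕜] E) ν - T) := by
      simp only [A, μ, Algebra.algebraMap_eq_smul_one, sub_smul]; abel
    rw [this]
    exact (spectrum.notMem_iff.1 hν).neg
  let e := LinearEquiv.ofBijective ((A - μ • 1 : E →L[𝕜] E) : E →ₗ[𝕜] E)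
    (ContinuousLinearMap.isUnit_iff_bijective.1 hunit)
  have : CompleteSpace K := A.isClosed_ker.completeSpace_coe
  have : CompleteSpace R := hA.completeSpace_coe
  let Φ : Rᗮ →ₗ[𝕜] K :=
    K.orthogonalProjectionOnto.toLinearMap ∘ₗ e.symm.toLinearMap ∘ₗ Rᗮ.subtype
  have hΦ : Function.Injective Φ := by
    refine (injective_iff_map_eq_zero Φ).2 fun f hf => ?_
    set x := e.symm f
    have hx : x ∈ Kᗮ := K.orthogonalProjectionOnto_eq_zero_iff.1 hf
    have hAx : A x - μ • x = f := e.apply_symm_apply f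
    have hμ : ‖A x‖ ≤ ‖μ‖ * ‖x‖ := norm_le_of_inner_sub_smul_eq_zero <| by
      rw [hAx]; exact R.inner_right_of_mem_orthogonal (LinearMap.mem_range_self _ x) f.2
    have hγx := hbd x hx
    have hμγ : ‖μ‖ < γ := by rwa [dist_comm, dist_eq_norm] at hdist
    have hx0 : x = 0 := norm_le_zero_iff.1 (by nlinarith [norm_nonneg x])
    rw [← Submodule.coe_eq_zero, ← hAx, hx0, map_zero, smul_zero, sub_zero]
  calc Module.rank 𝕜 (E ⧸ R) = Module.rank 𝕜 Rᗮ :=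
        (R.quotientEquivOfIsCompl Rᗮ R.isCompl_orthogonal).rank_eq
    _ ≤ Module.rank 𝕜 K := LinearMap.rank_le_of_injective Φ hΦ

end ClosedRange

section Fredholm

variable {H : Type*} [NormedAddCommGroup H] [InnerProductSpace ℂ H] [CompleteSpace H]
  {A : H →L[ℂ] H}

theorem isUSF_and_indexNonpos_of_antilipschitz {C : NNReal} (hA : AntilipschitzWith C A) :
    IsUSF A ∧ indexNonpos A := by
  have hker : LinearMap.ker (A : H →ₗ[ℂ] H) = ⊥ := LinearMap.ker_eq_bot.2 hA.injective
  refine ⟨⟨?_, by rw [hker]; infer_instance⟩, ?_⟩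
  · rw [LinearMap.coe_range, ContinuousLinearMap.coe_coe]
    exact hA.isClosed_range A.uniformContinuous
  · rw [indexNonpos, hker, rank_bot]
    exact zero_le

theorem isFredholmOp_and_indexZero_of_isUnit (hA : IsUnit A) :
    IsFredholmOp A ∧ indexZero A := by
  obtain ⟨hinj, hsurj⟩ := ContinuousLinearMap.isUnit_iff_bijective.1 hA
  have hker : LinearMap.ker (A : H →ₗ[ℂ] H) = ⊥ := LinearMap.ker_eq_bot.2 hinj
  have hrange : LinearMap.range (A : H →ₗ[ℂ] H) = ⊤ := LinearMap.range_eq_top.2 hsurj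
  have hcl : IsClosed (LinearMap.range (A : H →ₗ[ℂ] H) : Set H) := by
    rw [hrange, Submodule.top_coe]
    exact isClosed_univ
  refine ⟨⟨⟨hcl, by rw [hker]; infer_instance⟩, hcl, by rw [hrange]; infer_instance⟩, ?_⟩
  rw [indexZero, hker, rank_bot, (rank_quotient_eq_zero_iff _).2 hrange]

theorem isUnit_of_ker_eq_bot_of_indexZero (hker : LinearMap.ker (A : H →ₗ[ℂ] H) = ⊥)
    (hA : indexZero A) : IsUnit A := by
  rw [indexZero, hker, rank_bot, eq_comm, rank_quotient_eq_zero_iff] at hA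
  exact ContinuousLinearMap.isUnit_iff_bijective.2
    ⟨LinearMap.ker_eq_bot.1 hker, LinearMap.range_eq_top.1 hA⟩

end Fredholm

section Spectra

variable {H : Type*} [NormedAddCommGroup H] [InnerProductSpace ℂ H] {T : H →L[ℂ] H} {lam : ℂ}

@[simp]
theorem opShift_apply (x : H) : opShift T lam x = T x - lam • x := rfl

theorem isUnit_opShift_iff : IsUnit (opShift T lam) ↔ lam ∉ spectrum ℂ T := by
  rw [spectrum.notMem_iff, Algebra.algebraMap_eq_smul_one, ← neg_sub, IsUnit.neg_iff]
  rfl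

theorem notMem_specA_iff_antilipschitz :
    lam ∉ specA T ↔ ∃ C, AntilipschitzWith C (opShift T lam) := by
  simp only [specA, Set.mem_ofPred_eq, not_not, ← opShift_apply]
  constructor
  · rintro ⟨c, hc, hb⟩
    refine ⟨c⁻¹.toNNReal, (opShift T lam).antilipschitz_of_bound fun x => ?_⟩
    rw [Real.coe_toNNReal _ (inv_nonneg.2 hc.le), le_inv_mul_iff₀ hc]
    exact hb x
  · rintro ⟨C, hC⟩
    refine ⟨(C + 1)⁻¹, by positivity, fun x => ?_⟩
    rw [inv_mul_le_iff₀ (by positivity)]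
    calc ‖x‖ ≤ C * ‖opShift T lam x‖ := (opShift T lam).bound_of_antilipschitz hC x
      _ ≤ (C + 1) * ‖opShift T lam x‖ := by gcongr; linarith

theorem mem_specA_of_eigenvector {x : H} (hx : x ≠ 0) (hTx : T x = lam • x) :
    lam ∈ specA T := by
  by_contra h
  obtain ⟨C, hC⟩ := notMem_specA_iff_antilipschitz.1 h
  exact hx (hC.injective (by simp [hTx]))

theorem specUW_subset_specW : specUW T ⊆ specW T := fun _ hU ⟨hF, h0⟩ => hU ⟨hF.1, h0.le⟩

theorem e0set_subset_eset : E0set T ⊆ Eset T := fun _ h => ⟨h.1, h.2.1⟩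

theorem specA_subset_spectrum : specA T ⊆ spectrum ℂ T := by
  intro lam hA
  by_contra hσ
  exact notMem_specA_iff_antilipschitz.2
    ⟨_, (ContinuousLinearEquiv.ofUnit (isUnit_opShift_iff.2 hσ).unit).antilipschitz⟩ hA

variable [CompleteSpace H]

theorem specW_subset_spectrum : specW T ⊆ spectrum ℂ T := by
  intro lam hW
  by_contra hσ
  exact hW (isFredholmOp_and_indexZero_of_isUnit (isUnit_opShift_iff.2 hσ))

theorem specUW_subset_specA : specUW T ⊆ specA T := by
  intro lam hU
  by_contra hA
  obtain ⟨C, hC⟩ := notMem_specA_iff_antilipschitz.1 hA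
  exact hU (isUSF_and_indexNonpos_of_antilipschitz hC)

theorem spectrum_diff_specA_subset_specW_diff_specUW :
    spectrum ℂ T \ specA T ⊆ specW T \ specUW T := by
  rintro lam ⟨hσ, hA⟩
  refine ⟨fun hW => ?_, fun hU => hA (specUW_subset_specA hU)⟩
  obtain ⟨C, hC⟩ := notMem_specA_iff_antilipschitz.1 hA
  refine isUnit_opShift_iff.1 ?_ hσ
  exact isUnit_of_ker_eq_bot_of_indexZero (LinearMap.ker_eq_bot.2 hC.injective) hW.2

theorem exists_eigenvector_of_mem_spectrum_diff_specW (h : lam ∈ spectrum ℂ T \ specW T) :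
    ∃ x : H, x ≠ 0 ∧ T x = lam • x := by
  obtain ⟨hσ, hW⟩ := h
  have hker : LinearMap.ker (opShift T lam : H →ₗ[ℂ] H) ≠ ⊥ := fun hker =>
    isUnit_opShift_iff.1 (isUnit_of_ker_eq_bot_of_indexZero hker (not_not.1 hW).2) hσ
  obtain ⟨x, hx, hx0⟩ := Submodule.exists_mem_ne_zero_of_ne_bot hker
  exact ⟨x, hx0, by simpa [sub_eq_zero] using hx⟩

theorem spectrum_diff_specW_subset_specA_diff_specUW :
    spectrum ℂ T \ specW T ⊆ specA T \ specUW T := fun _ h =>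
  have ⟨_, hx, hTx⟩ := exists_eigenvector_of_mem_spectrum_diff_specW h
  ⟨mem_specA_of_eigenvector hx hTx, fun hU => h.2 (specUW_subset_specW hU)⟩

theorem notMem_specW_of_isIsolatedIn (hiso : IsIsolatedIn (spectrum ℂ T) lam)
    (hU : lam ∉ specUW T) : lam ∉ specW T := by
  obtain ⟨⟨hcl, hfin⟩, hle⟩ := not_not.1 hU
  have h0 : indexZero (opShift T lam) :=
    hle.antisymm (rank_quotient_range_sub_le_rank_ker T hcl hiso.mem_closure_compl)
  have hcofin : FiniteDimensional ℂ (H ⧸ LinearMap.range (opShift T lam : H →ₗ[ℂ] H)) :=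
    Module.rank_lt_aleph0_iff.1 (h0 ▸ Module.rank_lt_aleph0 ℂ _)
  exact not_not.2 ⟨⟨⟨hcl, hfin⟩, hcl, hcofin⟩, h0⟩

theorem eset_diff_specUW_subset_spectrum_diff_specW :
    Eset T \ specUW T ⊆ spectrum ℂ T \ specW T := fun _ ⟨hE, hU⟩ =>
  ⟨hE.1.1, notMem_specW_of_isIsolatedIn hE.1 hU⟩

end Spectra

section PropUWE

variable {H : Type*} [NormedAddCommGroup H] [InnerProductSpace ℂ H] {T : H →L[ℂ] H}

theorem PropUWE.eset_eq_e0set (h : PropUWE T) : Eset T = E0set T := by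
  refine Set.Subset.antisymm (fun lam hE => ⟨hE.1, hE.2, ?_⟩) e0set_subset_eset
  rw [← h] at hE
  exact (not_not.1 hE.2).1.2

variable [CompleteSpace H]

theorem PropUWE.specA_diff_specUW_eq (h : PropUWE T) :
    specA T \ specUW T = spectrum ℂ T \ specW T := by
  refine Set.Subset.antisymm (fun lam hl => eset_diff_specUW_subset_spectrum_diff_specW ⟨?_, hl.2⟩)
    spectrum_diff_specW_subset_specA_diff_specUW
  rwa [h] at hl

theorem PropUWE.weylsTheorem (h : PropUWE T) : WeylsTheorem T := by
  rw [WeylsTheorem, ← h.specA_diff_specUW_eq, h, h.eset_eq_e0set]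

theorem PropUWE.specW_diff_specUW (h : PropUWE T) :
    specW T \ specUW T = spectrum ℂ T \ specA T := by
  refine Set.Subset.antisymm (fun lam ⟨hW, hU⟩ => ⟨specW_subset_spectrum hW, fun hA => ?_⟩)
    spectrum_diff_specA_subset_specW_diff_specUW
  have : lam ∈ spectrum ℂ T \ specW T := h.specA_diff_specUW_eq ▸ ⟨hA, hU⟩
  exact this.2 hW

theorem propUWE_of_weylsTheorem (hW : WeylsTheorem T)
    (hWUW : specW T \ specUW T = spectrum ℂ T \ specA T) (hE : Eset T = E0set T) :
    PropUWE T := by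
  rw [PropUWE, hE, ← hW]
  refine Set.Subset.antisymm (fun lam ⟨hA, hU⟩ => ⟨specA_subset_spectrum hA, fun hw => ?_⟩)
    spectrum_diff_specW_subset_specA_diff_specUW
  have : lam ∈ spectrum ℂ T \ specA T := hWUW ▸ ⟨hw, hU⟩
  exact this.2 hA

end PropUWE

theorem propUWE_iff_weyl_and_general
    {H : Type*} [NormedAddCommGroup H] [InnerProductSpace ℂ H] [CompleteSpace H]
    (T : H →L[ℂ] H) :
    PropUWE T ↔
      (WeylsTheorem T ∧ specW T \ specUW T = spectrum ℂ T \ specA T ∧ Eset T = E0set T) :=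
  ⟨fun h => ⟨h.weylsTheorem, h.specW_diff_specUW, h.eset_eq_e0set⟩,
    fun ⟨hW, hWUW, hE⟩ => propUWE_of_weylsTheorem hW hWUW hE⟩

/-- `T` satisfies property `(UW_E)` iff `T` satisfies Weyl's theorem,
`σ_w(T) \ σ_uw(T) = σ(T) \ σ_a(T)` and `E(T) = E₀(T)`. -/
theorem propUWE_iff_weyl_and
    {H : Type*} [NormedAddCommGroup H] [InnerProductSpace ℂ H] [CompleteSpace H]
    [TopologicalSpace.SeparableSpace H] (hinf : ¬ FiniteDimensional ℂ H)
    (T : H →L[ℂ] H) :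
    PropUWE T ↔
      (WeylsTheorem T ∧ specW T \ specUW T = spectrum ℂ T \ specA T ∧ Eset T = E0set T) :=
  propUWE_iff_weyl_and_general T
end
end

section
/- Let T be the bounded operator on ℓ² defined by T(x₁,x₂,x₃,…) = (0, x₁, 0, x₂, 0, x₃, …), i.e. (Tx)_{2k} = x_k and (Tx)_{2k−1} = 0 for k ≥ 1. Then σ(T) = {λ ∈ ℂ : |λ| ≤ 1}, σ_a(T) = σ_uw(T) = {λ ∈ ℂ : |λ| = 1}, and E(T) = ∅; consequently T satisfies property (UW_E). -/
/-!
The operator `T` is an isometry whose range is orthogonal to `e = e₀`, so the vectors `Tⁿ e`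
are orthonormal. If `(λ - T) x = e` with `|λ| ≤ 1`, pairing with `Tʲ e` gives
`λ ^ (j + 1) ⟪Tʲ e, x⟫ = 1`, contradicting Bessel's inequality; hence `σ(T)` is the closed disc.
For `|λ| = 1` the vectors `∑_{j < N} λ̄ʲ Tʲ e` have norm `√N` while `T - λ` telescopes them to
norm at most `2`, so the circle lies in `σ_a(T)`; off the circle `T - λ` is bounded below because
`T` is an isometry. Finally `T` has no eigenvalues, so by the open mapping theorem `T - λ` has
closed range exactly when it is bounded below: `σ_uw(T) = σ_a(T)` and `E(T) = ∅`.
-/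

noncomputable section

open Set MeasureTheory

/-- The Hilbert space `ℓ²`. -/
abbrev l2 := lp (fun _ : ℕ => ℂ) 2

open scoped InnerProductSpace ENNReal
open ComplexConjugate

section Isometry

variable {E : Type*} [NormedAddCommGroup E] [InnerProductSpace ℂ E] {T : E →L[ℂ] E}

theorem specA_subset_sphere_of_isometry (hT : ∀ x, ‖T x‖ = ‖x‖) :
    specA T ⊆ Metric.sphere (0 : ℂ) 1 := by
  intro lam hlam
  rw [mem_sphere_zero_iff_norm]
  by_contra hne
  refine hlam ⟨|1 - ‖lam‖|, abs_pos.2 (sub_ne_zero.2 (Ne.symm hne)), fun x => ?_⟩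
  calc |1 - ‖lam‖| * ‖x‖ = |‖T x‖ - ‖lam • x‖| := by
        rw [hT, norm_smul, ← one_sub_mul, abs_mul, abs_of_nonneg (norm_nonneg x)]
    _ ≤ ‖T x - lam • x‖ := abs_norm_sub_norm_le _ _

theorem norm_pow_apply_of_isometry (hT : ∀ x, ‖T x‖ = ‖x‖) (n : ℕ) (x : E) :
    ‖(T ^ n) x‖ = ‖x‖ := by
  induction n with
  | zero => rfl
  | succ n ih => rw [pow_succ', mul_apply_eq_comp, hT, ih]

variable {e : E}

theorem inner_pow_apply_eq_zero_of_lt (hT : ∀ x, ‖T x‖ = ‖x‖)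
    (he : ∀ x, ⟪e, T x⟫_ℂ = 0) {i j : ℕ} (hij : i < j) :
    ⟪(T ^ i) e, (T ^ j) e⟫_ℂ = 0 := by
  obtain ⟨k, rfl⟩ := Nat.exists_eq_add_of_lt hij
  have hTi : ∀ x y, ⟪(T ^ i) x, (T ^ i) y⟫_ℂ = ⟪x, y⟫_ℂ :=
    (LinearMap.norm_map_iff_inner_map_map (T ^ i)).1 (norm_pow_apply_of_isometry hT i)
  rw [add_assoc, pow_add, mul_apply_eq_comp, hTi, pow_succ', mul_apply_eq_comp, he]

theorem orthonormal_pow_apply_of_isometry (hT : ∀ x, ‖T x‖ = ‖x‖) (he₁ : ‖e‖ = 1)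
    (he : ∀ x, ⟪e, T x⟫_ℂ = 0) : Orthonormal ℂ fun n => (T ^ n) e := by
  refine ⟨fun n => (norm_pow_apply_of_isometry hT n e).trans he₁, fun i j hij => ?_⟩
  rcases hij.lt_or_gt with hij | hji
  · exact inner_pow_apply_eq_zero_of_lt hT he hij
  · exact inner_eq_zero_symm.1 (inner_pow_apply_eq_zero_of_lt hT he hji)

theorem exists_norm_sq_eq_and_norm_sub_smul_le_two (hT : ∀ x, ‖T x‖ = ‖x‖) (he₁ : ‖e‖ = 1)
    (he : ∀ x, ⟪e, T x⟫_ℂ = 0) {lam : ℂ} (hlam : ‖lam‖ = 1) (N : ℕ) :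
    ∃ x : E, ‖x‖ ^ 2 = N ∧ ‖T x - lam • x‖ ≤ 2 := by
  set v : ℕ → E := fun j => conj lam ^ j • (T ^ j) e with hv
  have hlam_conj : lam * conj lam = 1 := by
    rw [Complex.mul_conj', hlam]; norm_num
  have hnorm_conj : ∀ j, ‖conj lam ^ j‖ = 1 := fun j => by
    rw [norm_pow, Complex.norm_conj, hlam, one_pow]
  have hTv : ∀ j, T (v j) = lam • v (j + 1) := fun j => by
    rw [hv, map_smul, smul_smul, pow_succ, mul_left_comm, hlam_conj, mul_one, pow_succ',
      mul_apply_eq_comp]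
  refine ⟨∑ j ∈ Finset.range N, v j, ?_, ?_⟩
  · have h := (orthonormal_pow_apply_of_isometry hT he₁ he).inner_sum
      (fun j => conj lam ^ j) (fun j => conj lam ^ j) (Finset.range N)
    simp only [Complex.conj_mul', hnorm_conj, one_pow, Complex.ofReal_one, Finset.sum_const,
      Finset.card_range, nsmul_eq_mul, mul_one] at h
    rw [← inner_self_eq_norm_sq (𝕜 := ℂ), h, RCLike.natCast_re]
  · have hv_norm : ∀ j, ‖v j‖ = 1 := fun j => by
      rw [hv, norm_smul, hnorm_conj, norm_pow_apply_of_isometry hT, he₁, one_mul]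
    calc ‖T (∑ j ∈ Finset.range N, v j) - lam • ∑ j ∈ Finset.range N, v j‖
        = ‖lam • (v N - v 0)‖ := by
          simp only [map_sum, hTv, ← Finset.smul_sum, ← smul_sub, ← Finset.sum_sub_distrib,
            Finset.sum_range_sub]
      _ ≤ ‖v N‖ + ‖v 0‖ := by rw [norm_smul, hlam, one_mul]; exact norm_sub_le _ _
      _ = 2 := by rw [hv_norm, hv_norm]; norm_num

theorem sphere_subset_specA_of_isometry (hT : ∀ x, ‖T x‖ = ‖x‖) (he₁ : ‖e‖ = 1)
    (he : ∀ x, ⟪e, T x⟫_ℂ = 0) : Metric.sphere (0 : ℂ) 1 ⊆ specA T := by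
  rintro lam hlam ⟨c, hc, hbound⟩
  obtain ⟨N, hN⟩ := exists_nat_gt (4 / c ^ 2)
  obtain ⟨x, hx, hTx⟩ :=
    exists_norm_sq_eq_and_norm_sub_smul_le_two hT he₁ he (mem_sphere_zero_iff_norm.1 hlam) N
  have hcx : c * ‖x‖ ≤ 2 := (hbound x).trans hTx
  have : c ^ 2 * N ≤ 4 := by
    rw [← hx, ← mul_pow]
    exact pow_le_pow_left₀ (by positivity) hcx 2 |>.trans (by norm_num)
  rw [div_lt_iff₀ (by positivity)] at hN
  linarith

theorem pow_succ_mul_inner_pow_apply_eq_one (hT : ∀ x, ‖T x‖ = ‖x‖) (he₁ : ‖e‖ = 1)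
    (he : ∀ x, ⟪e, T x⟫_ℂ = 0) {lam : ℂ} {x : E} (hx : lam • x - T x = e) (j : ℕ) :
    lam ^ (j + 1) * ⟪(T ^ j) e, x⟫_ℂ = 1 := by
  have hu := orthonormal_iff_ite.1 (orthonormal_pow_apply_of_isometry hT he₁ he)
  have hTinner := (LinearMap.norm_map_iff_inner_map_map T).1 hT
  have hcoeff : ∀ i, lam * ⟪(T ^ i) e, x⟫_ℂ - ⟪(T ^ i) e, T x⟫_ℂ = if i = 0 then 1 else 0 :=
    fun i => by
      have h := congrArg (⟪(T ^ i) e, ·⟫_ℂ) hx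
      rw [inner_sub_right, inner_smul_right] at h
      rw [h, ← hu i 0, pow_zero, one_apply_eq_self]
  induction j with
  | zero => simpa [he] using hcoeff 0
  | succ j ih =>
    have h : lam * ⟪(T ^ (j + 1)) e, x⟫_ℂ = ⟪(T ^ j) e, x⟫_ℂ := by
      have h := hcoeff (j + 1)
      rw [if_neg j.succ_ne_zero, sub_eq_zero, pow_succ', mul_apply_eq_comp, hTinner] at h
      rwa [pow_succ', mul_apply_eq_comp]
    rw [pow_succ, mul_assoc, h, ih]

theorem closedBall_subset_spectrum_of_isometry (hT : ∀ x, ‖T x‖ = ‖x‖) (he₁ : ‖e‖ = 1)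
    (he : ∀ x, ⟪e, T x⟫_ℂ = 0) : Metric.closedBall (0 : ℂ) 1 ⊆ spectrum ℂ T := by
  intro lam hlam hunit
  rw [mem_closedBall_zero_iff] at hlam
  set x := ((hunit.unit⁻¹ : (E →L[ℂ] E)ˣ) : E →L[ℂ] E) e
  have hx : lam • x - T x = e := by
    have h := congrArg (· e) hunit.mul_val_inv
    simp only [mul_apply_eq_comp, one_apply_eq_self] at h
    simpa [Algebra.algebraMap_eq_smul_one] using h
  have hlarge : ∀ j, 1 ≤ ‖⟪(T ^ j) e, x⟫_ℂ‖ ^ 2 := fun j => by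
    have h := congrArg norm (pow_succ_mul_inner_pow_apply_eq_one hT he₁ he hx j)
    rw [norm_mul, norm_pow, norm_one] at h
    have hpow : ‖lam‖ ^ (j + 1) ≤ 1 := pow_le_one₀ (norm_nonneg _) hlam
    nlinarith [norm_nonneg ⟪(T ^ j) e, x⟫_ℂ]
  have hsmall := ((orthonormal_pow_apply_of_isometry hT he₁ he).inner_products_summable
    x).tendsto_atTop_zero.eventually (gt_mem_nhds zero_lt_one)
  obtain ⟨j, hj⟩ := hsmall.exists
  exact (hlarge j).not_gt hj

theorem spectrum_eq_closedBall_of_isometry [CompleteSpace E] (hT : ∀ x, ‖T x‖ = ‖x‖)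
    (he₁ : ‖e‖ = 1) (he : ∀ x, ⟪e, T x⟫_ℂ = 0) : spectrum ℂ T = Metric.closedBall (0 : ℂ) 1 := by
  refine subset_antisymm (fun lam hlam => ?_) (closedBall_subset_spectrum_of_isometry hT he₁ he)
  have hT_norm : ‖T‖ ≤ 1 := T.opNorm_le_bound zero_le_one fun x => by rw [hT, one_mul]
  have h := spectrum.subset_closedBall_norm_mul T hlam
  rw [mem_closedBall_zero_iff] at h ⊢
  exact h.trans (mul_le_one₀ hT_norm (norm_nonneg _) ContinuousLinearMap.norm_id_le)

theorem specA_eq_sphere_of_isometry (hT : ∀ x, ‖T x‖ = ‖x‖) (he₁ : ‖e‖ = 1)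
    (he : ∀ x, ⟪e, T x⟫_ℂ = 0) : specA T = Metric.sphere (0 : ℂ) 1 :=
  (specA_subset_sphere_of_isometry hT).antisymm (sphere_subset_specA_of_isometry hT he₁ he)

end Isometry

section NoEigenvalues

variable {E : Type*} [NormedAddCommGroup E] [InnerProductSpace ℂ E] {T : E →L[ℂ] E}

theorem Eset_eq_empty_of_no_eigenvalues (hT : ∀ (lam : ℂ) (x : E), T x = lam • x → x = 0) :
    Eset T = ∅ :=
  Set.eq_empty_iff_forall_notMem.2 fun lam ⟨_, x, hx0, hx⟩ => hx0 (hT lam x hx)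

theorem specUW_eq_specA_of_no_eigenvalues [CompleteSpace E]
    (hT : ∀ (lam : ℂ) (x : E), T x = lam • x → x = 0) : specUW T = specA T := by
  ext lam
  have hker : LinearMap.ker (opShift T lam : E →ₗ[ℂ] E) = ⊥ :=
    LinearMap.ker_eq_bot'.2 fun x hx => hT lam x (sub_eq_zero.1 hx)
  have hclosed : IsClosed (Set.range (opShift T lam)) ↔
      ∃ c > 0, ∀ x, c * ‖x‖ ≤ ‖opShift T lam x‖ :=
    ((opShift T lam).isClosed_range_iff_antilipschitz_of_injective
      (LinearMap.ker_eq_bot.1 hker)).trans antilipschitzWith_iff_exists_mul_le_norm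
  simp only [specUW, specA, IsUSF, indexNonpos, Set.mem_ofPred_eq, not_iff_not]
  rw [hker, rank_bot, LinearMap.coe_range, ContinuousLinearMap.coe_coe, hclosed]
  exact (and_iff_left zero_le).trans (and_iff_left inferInstance)

end NoEigenvalues

namespace DilationShift

variable {T : l2 →L[ℂ] l2}
  (hT : ∀ (x : l2) (n : ℕ), (T x) n = if Odd n then x ((n - 1) / 2) else 0)
include hT

theorem apply_two_mul_add_one (x : l2) (k : ℕ) : T x (2 * k + 1) = x k := by
  rw [hT, if_pos (odd_two_mul_add_one k), Nat.add_sub_cancel, Nat.mul_div_cancel_left k two_pos]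

theorem norm_apply (x : l2) : ‖T x‖ = ‖x‖ := by
  have hp : (0 : ℝ) < (2 : ℝ≥0∞).toReal := by norm_num
  rw [lp.norm_eq_tsum_rpow hp, lp.norm_eq_tsum_rpow hp x]
  congr 1
  have hinj : Function.Injective fun k : ℕ => 2 * k + 1 := fun a b h => by simpa using h
  rw [← hinj.tsum_eq (f := fun n => ‖T x n‖ ^ (2 : ℝ≥0∞).toReal)]
  · simp only [apply_two_mul_add_one hT]
  · intro n hn
    rcases Nat.even_or_odd n with heven | ⟨k, rfl⟩
    · refine absurd ?_ hn
      change ‖T x n‖ ^ (2 : ℝ≥0∞).toReal = 0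
      rw [hT, if_neg (Nat.not_odd_iff_even.2 heven), norm_zero, Real.zero_rpow hp.ne']
    · exact ⟨k, rfl⟩

theorem inner_single_zero_apply (x : l2) : ⟪lp.single 2 0 (1 : ℂ), T x⟫_ℂ = 0 := by
  rw [lp.inner_single_left, hT, if_neg Nat.not_odd_zero, inner_zero_right]

theorem eq_zero_of_apply_eq_smul {lam : ℂ} {x : l2} (hx : T x = lam • x) : x = 0 := by
  rcases eq_or_ne lam 0 with rfl | hlam
  · rw [← norm_eq_zero, ← norm_apply hT, hx, zero_smul, norm_zero]
  ext n
  induction n using Nat.strong_induction_on with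
  | _ n ih =>
    refine (mul_eq_zero.1 ?_).resolve_left hlam
    have hn : T x n = lam * x n := by rw [hx]; rfl
    rw [← hn, hT]
    split_ifs with hodd
    · obtain ⟨k, rfl⟩ := hodd
      exact ih _ (by omega)
    · rfl

end DilationShift

/-- the operator `T(x₁,x₂,x₃,…) = (0, x₁, 0, x₂, 0, x₃, …)`
(with 0-indexed coordinates: `(Tx)ₙ = x_{(n-1)/2}` for odd `n`, `0` for even `n`)
has `σ(T) = 𝔻̄`, `σ_a(T) = σ_uw(T) = ∂𝔻` and `E(T) = ∅`; consequently `T`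
satisfies property `(UW_E)`. -/
theorem stmt13_dilation_shift_example
    (T : l2 →L[ℂ] l2)
    (hT : ∀ (x : l2) (n : ℕ), (T x) n = if Odd n then x ((n - 1) / 2) else 0) :
    spectrum ℂ T = Metric.closedBall (0 : ℂ) 1 ∧
    specA T = Metric.sphere (0 : ℂ) 1 ∧
    specUW T = Metric.sphere (0 : ℂ) 1 ∧
    Eset T = ∅ ∧
    PropUWE T := by
  have hiso := DilationShift.norm_apply hT
  have he₁ : ‖(lp.single 2 0 1 : l2)‖ = 1 := by rw [lp.norm_single two_pos, norm_one]
  have he := DilationShift.inner_single_zero_apply hT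
  have hno_eig (lam : ℂ) (x : l2) : T x = lam • x → x = 0 :=
    DilationShift.eq_zero_of_apply_eq_smul hT
  have hA := specA_eq_sphere_of_isometry hiso he₁ he
  have hUW := (specUW_eq_specA_of_no_eigenvalues hno_eig).trans hA
  have hE := Eset_eq_empty_of_no_eigenvalues hno_eig
  exact ⟨spectrum_eq_closedBall_of_isometry hiso he₁ he, hA, hUW, hE,
    by rw [PropUWE, hA, hUW, hE, Set.sdiff_self]⟩
end
end
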